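/- arXiv:1501.05905 — 3 statements merged into one kernel-verified Lean document; each statement's English description precedes it below -/
import Mathlib

section
/- Let H be a complex Hilbert space with symplectic form ω(u,v) := -Im⟪u,v⟫ and let T : H → H be a continuous ℝ-linear bijection satisfying ω(Tu,Tv) = ω(u,v) for all u,v ∈ H. If for some radii r, R > 0 and some unit vector e ∈ H we have T(B(r)) ⊆ Z(R), then r ≤ R. -/
/-!
Let `T x = e` and `T y = I • e`. As `T` preserves `Im ⟪·, ·⟫`, we have `Im ⟪x, u⟫ = Im ⟪e, T u⟫`
and `Im ⟪y, u⟫ = -Re ⟪e, T u⟫`, both of absolute value `< R` on `B(r)`; testing on multiples of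
`I • x` and `I • y` gives `r ‖x‖ ≤ R` and `r ‖y‖ ≤ R`. But `Im ⟪x, y⟫ = Im ⟪e, I • e⟫ = 1`, so
`‖x‖ ‖y‖ ≥ 1` by Cauchy–Schwarz, and hence `r² ≤ R²`.
-/

open Complex
open scoped InnerProductSpace

section SymplecticWidth

variable {H : Type*} [NormedAddCommGroup H] [InnerProductSpace ℂ H]

theorem im_inner_I_smul_self (z : H) : (⟪z, I • z⟫_ℂ).im = ‖z‖ ^ 2 := by
  rw [inner_smul_right, inner_self_eq_norm_sq_to_K, I_mul_im]
  norm_cast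

theorem im_inner_I_smul_left (x y : H) : (⟪I • x, y⟫_ℂ).im = -(⟪x, y⟫_ℂ).re := by
  simp

theorem mul_norm_le_of_forall_abs_im_inner_lt {z : H} {r R : ℝ} (hr : 0 < r)
    (h : ∀ u : H, ‖u‖ < r → |(⟪z, u⟫_ℂ).im| < R) : r * ‖z‖ ≤ R := by
  have hR : 0 < R := by simpa using h 0 (by simpa)
  rcases eq_or_ne z 0 with rfl | hz
  · simpa using hR.le
  by_contra! hlt
  have hz_pos : 0 < ‖z‖ := norm_pos_iff.2 hz
  obtain ⟨t, hRt, htr⟩ := exists_between ((div_lt_iff₀ hz_pos).2 hlt)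
  have ht : 0 < t := (div_pos hR hz_pos).trans hRt
  -- the test vector points along `I • z`, where `Im ⟪z, ·⟫` grows fastest
  have hnorm : ‖((t / ‖z‖ : ℝ) : ℂ) • I • z‖ = t := by
    simp [norm_smul, abs_of_pos ht, hz]
  have him : (⟪z, ((t / ‖z‖ : ℝ) : ℂ) • I • z⟫_ℂ).im = t * ‖z‖ := by
    rw [inner_smul_right, im_ofReal_mul, im_inner_I_smul_self]
    field_simp
  have hlt' := h _ (hnorm ▸ htr)
  rw [him, abs_of_pos (by positivity)] at hlt'
  linarith [(div_lt_iff₀ hz_pos).1 hRt]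

theorem one_le_norm_mul_norm_of_im_inner_eq_one {x y : H} (h : (⟪x, y⟫_ℂ).im = 1) :
    1 ≤ ‖x‖ * ‖y‖ :=
  calc (1 : ℝ) = |(⟪x, y⟫_ℂ).im| := by rw [h, abs_one]
    _ ≤ ‖⟪x, y⟫_ℂ‖ := abs_im_le_norm _
    _ ≤ ‖x‖ * ‖y‖ := norm_inner_le_norm x y

end SymplecticWidth

theorem linear_nonsqueezing_general
    {H : Type*} [NormedAddCommGroup H] [InnerProductSpace ℂ H]
    (T : H →L[ℝ] H) (hTbij : Function.Bijective T)
    (hTsymp : ∀ u v : H, -(inner ℂ (T u) (T v) : ℂ).im = -(inner ℂ u v : ℂ).im)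
    (r R : ℝ) (hr : 0 < r)
    (e : H) (he : ‖e‖ = 1)
    (hsq : ∀ u : H, ‖u‖ < r → ‖(inner ℂ e (T u) : ℂ)‖ < R) :
    r ≤ R := by
  have hT (u v : H) : (⟪T u, T v⟫_ℂ).im = (⟪u, v⟫_ℂ).im := neg_inj.1 (hTsymp u v)
  obtain ⟨x, hx⟩ := hTbij.2 e
  obtain ⟨y, hy⟩ := hTbij.2 (I • e)
  have hx_width : r * ‖x‖ ≤ R := mul_norm_le_of_forall_abs_im_inner_lt hr fun u hu => by
    rw [← hT, hx]
    exact (abs_im_le_norm _).trans_lt (hsq u hu)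
  have hy_width : r * ‖y‖ ≤ R := mul_norm_le_of_forall_abs_im_inner_lt hr fun u hu => by
    rw [← hT, hy, im_inner_I_smul_left, abs_neg]
    exact (abs_re_le_norm _).trans_lt (hsq u hu)
  have hxy : 1 ≤ ‖x‖ * ‖y‖ := one_le_norm_mul_norm_of_im_inner_eq_one <| by
    rw [← hT, hx, hy, im_inner_I_smul_self, he, one_pow]
  have hR : 0 ≤ R := (mul_nonneg hr.le (norm_nonneg x)).trans hx_width
  have hsq_le : r * r ≤ R * R :=
    calc r * r ≤ r * r * (‖x‖ * ‖y‖) := le_mul_of_one_le_right (by positivity) hxy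
      _ = (r * ‖x‖) * (r * ‖y‖) := by ring
      _ ≤ R * R := mul_le_mul hx_width hy_width (by positivity) hR
  exact (mul_self_le_mul_self_iff hr.le hR).2 hsq_le

/-- **Linear non-squeezing**: a continuous linear symplectomorphism `T` of a
complex Hilbert space `H` (with symplectic form `ω u v = -Im ⟪u, v⟫`) mapping
the ball of radius `r` into the cylinder of radius `R` over a unit vector `e`
forces `r ≤ R`. -/
theorem linear_nonsqueezing
    {H : Type*} [NormedAddCommGroup H] [InnerProductSpace ℂ H] [CompleteSpace H]
    (T : H →L[ℝ] H) (hTbij : Function.Bijective T)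
    (hTsymp : ∀ u v : H, -(inner ℂ (T u) (T v) : ℂ).im = -(inner ℂ u v : ℂ).im)
    (r R : ℝ) (hr : 0 < r) (hR : 0 < R)
    (e : H) (he : ‖e‖ = 1)
    (hsq : ∀ u : H, ‖u‖ < r → ‖(inner ℂ e (T u) : ℂ)‖ < R) :
    r ≤ R :=
  linear_nonsqueezing_general T hTbij hTsymp r R hr e he hsq
end

section
/- Galerkin approximation of flows: let H be a real Hilbert space, let X : H → H be Lipschitz with constant L, and let (P_k) be a sequence of orthogonal projections onto closed subspaces of H such that P_k u → u for every u ∈ H. Set X_k := P_k ∘ X ∘ P_k. Suppose φ and φ_k are global flows of X and X_k respectively, i.e. φ(0,u) = u, ∂_t φ(t,u) = X(φ(t,u)), and φ_k(0,u) = u, ∂_t φ_k(t,u) = X_k(φ_k(t,u)) for all t ∈ ℝ, u ∈ H. Then for every t ∈ ℝ and u ∈ H, φ_k(t,u) → φ(t,u) as k → ∞. -/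
open scoped RealInnerProductSpace NNReal Topology
open Filter Set

/-!
The Galerkin fields `X_k = P_k ∘ X ∘ P_k` are `L`-Lipschitz, since orthogonal projections are
`1`-Lipschitz, and converge to `X` pointwise; being equicontinuous, they converge uniformly on the
compact trajectory `{φ s u | s ∈ [[0, t]]}`. The exact trajectory of `X` is thus an
`ε_k`-approximate trajectory of `X_k` with `ε_k → 0`, and Grönwall's inequality bounds
`‖φk k t u - φ t u‖` by `gronwallBound 0 L ε_k |t| → 0`.
-/

theorem LinearMap.IsSymmetricProjection.lipschitzWith_one {𝕜 E : Type*} [RCLike 𝕜]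
    [NormedAddCommGroup E] [InnerProductSpace 𝕜 E] {Q : E →L[𝕜] E}
    (hQ : (Q : E →ₗ[𝕜] E).IsSymmetricProjection) : LipschitzWith 1 Q := by
  obtain ⟨_, hQK⟩ := LinearMap.isSymmetricProjection_iff_eq_coe_starProjection_range.mp hQ
  rw [show Q = (LinearMap.range (Q : E →ₗ[𝕜] E)).starProjection from
    ContinuousLinearMap.coe_injective hQK]
  exact Submodule.lipschitzWith_starProjection _

theorem tendsto_apply_of_lipschitzWith {ι X Y : Type*} [PseudoMetricSpace X] [PseudoMetricSpace Y]
    {K : ℝ≥0} {F : ι → X → Y} {l : Filter ι} {u : ι → X} {x : X} {y : Y}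
    (hF : ∀ i, LipschitzWith K (F i)) (hFx : Tendsto (fun i => F i x) l (𝓝 y))
    (hu : Tendsto u l (𝓝 x)) : Tendsto (fun i => F i (u i)) l (𝓝 y) := by
  have hxu : Tendsto (fun i => K * dist x (u i)) l (𝓝 0) := by
    simpa using ((tendsto_const_nhds (x := x)).dist hu).const_mul (K : ℝ)
  exact hFx.congr_dist
    (squeeze_zero (fun _ => dist_nonneg) (fun i => (hF i).dist_le_mul x (u i)) hxu)

theorem tendstoUniformlyOn_of_lipschitzWith {ι X Y : Type*} [PseudoMetricSpace X]
    [PseudoMetricSpace Y] {K : ℝ≥0} {F : ι → X → Y} {f : X → Y} {l : Filter ι} {S : Set X}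
    (hF : ∀ i, LipschitzWith K (F i)) (hS : IsCompact S)
    (hFf : ∀ x, Tendsto (fun i => F i x) l (𝓝 (f x))) : TendstoUniformlyOn F f l S := by
  have hFeq : EquicontinuousOn F S :=
    (LipschitzWith.uniformEquicontinuous F K hF).equicontinuous.equicontinuousOn S
  have := (EquicontinuousOn.tendsto_uniformOnFun_iff_pi' (𝔖 := {S}) (by simpa) (by simpa) l f).2
    (tendsto_pi_nhds.2 fun x => hFf x)
  rw [UniformOnFun.tendsto_iff_tendstoUniformlyOn] at this
  exact this S rfl

theorem exists_pos_gronwallBound_lt (K x : ℝ) {ε : ℝ} (hε : 0 < ε) :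
    ∃ δ > 0, gronwallBound 0 K δ x < ε := by
  have h : Tendsto (fun δ => gronwallBound 0 K δ x) (𝓝[>] 0) (𝓝 0) := by
    simpa [gronwallBound_ε0_δ0] using
      (gronwallBound_continuous_ε 0 K x).tendsto 0 |>.mono_left nhdsWithin_le_nhds
  obtain ⟨δ, hδε, hδ⟩ := ((h.eventually (gt_mem_nhds hε)).and self_mem_nhdsWithin).exists
  exact ⟨δ, hδ, hδε⟩

section

variable {ι E : Type*} [NormedAddCommGroup E] [NormedSpace ℝ E] {l : Filter ι} {K : ℝ≥0}
  {Y : E → E} {Yk : ι → E → E} {f : ℝ → E} {g : ι → ℝ → E}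

theorem tendsto_solution_of_tendstoUniformlyOn_of_nonneg (hYk : ∀ i, LipschitzWith K (Yk i))
    (hf : ∀ s, HasDerivAt f (Y (f s)) s) (hg : ∀ i s, HasDerivAt (g i) (Yk i (g i s)) s)
    (h0 : ∀ i, g i 0 = f 0) {b : ℝ} (hb : 0 ≤ b)
    (hY : TendstoUniformlyOn Yk Y l (f '' Icc 0 b)) :
    Tendsto (fun i => g i b) l (𝓝 (f b)) := by
  rw [Metric.tendsto_nhds]
  intro ε hε
  obtain ⟨δ, hδ, hδε⟩ := exists_pos_gronwallBound_lt K b hε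
  filter_upwards [Metric.tendstoUniformlyOn_iff.1 hY δ hδ] with i hi
  have hfc : Continuous f := continuous_iff_continuousAt.2 fun s => (hf s).continuousAt
  have hgc : Continuous (g i) := continuous_iff_continuousAt.2 fun s => (hg i s).continuousAt
  have hfg := dist_le_of_approx_trajectories_ODE (v := fun _ => Yk i) (fun _ => hYk i)
    hfc.continuousOn (fun s _ => (hf s).hasDerivWithinAt)
    (fun s hs => (hi (f s) (mem_image_of_mem f (Ico_subset_Icc_self hs))).le)
    hgc.continuousOn (fun s _ => (hg i s).hasDerivWithinAt)
    (fun s _ => (dist_self _).le) (dist_le_zero.2 (h0 i).symm) b ⟨hb, le_rfl⟩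
  rw [add_zero, sub_zero] at hfg
  rw [dist_comm]
  exact hfg.trans_lt hδε

theorem tendsto_solution_of_tendstoUniformlyOn (hYk : ∀ i, LipschitzWith K (Yk i))
    (hf : ∀ s, HasDerivAt f (Y (f s)) s) (hg : ∀ i s, HasDerivAt (g i) (Yk i (g i s)) s)
    (h0 : ∀ i, g i 0 = f 0) {t : ℝ} (hY : TendstoUniformlyOn Yk Y l (f '' uIcc 0 t)) :
    Tendsto (fun i => g i t) l (𝓝 (f t)) := by
  rcases le_total 0 t with ht | ht
  · rw [uIcc_of_le ht] at hY
    exact tendsto_solution_of_tendstoUniformlyOn_of_nonneg hYk hf hg h0 ht hY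
  -- for negative times, compare the time-reversed solutions of `-Y` and `-Yk i`
  have hY' : TendstoUniformlyOn (fun i y => -Yk i y) (fun y => -Y y) l
      ((f ∘ Neg.neg) '' Icc 0 (-t)) := by
    refine (uniformContinuous_neg.comp_tendstoUniformlyOn hY).mono ?_
    rintro _ ⟨s, hs, rfl⟩
    exact ⟨-s, by rw [uIcc_of_ge ht]; constructor <;> linarith [hs.1, hs.2], rfl⟩
  simpa using tendsto_solution_of_tendstoUniformlyOn_of_nonneg (fun i => (hYk i).neg)
    (fun s => ((hf (-s)).scomp s (hasDerivAt_neg s)).congr_deriv (neg_one_smul ℝ _))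
    (fun i s => ((hg i (-s)).scomp s (hasDerivAt_neg s)).congr_deriv (neg_one_smul ℝ _))
    (by simpa using h0) (neg_nonneg.2 ht) hY'

end

theorem galerkin_flow_convergence_general
    {H : Type*} [NormedAddCommGroup H] [InnerProductSpace ℝ H]
    (L : NNReal) (X : H → H) (hX : LipschitzWith L X)
    (P : ℕ → H →L[ℝ] H)
    (hidem : ∀ (k : ℕ) (u : H), P k (P k u) = P k u)
    (hselfadj : ∀ (k : ℕ) (u v : H), ⟪P k u, v⟫ = ⟪u, P k v⟫)
    (hconv : ∀ u : H, Filter.Tendsto (fun k => P k u) Filter.atTop (nhds u))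
    (φ : ℝ → H → H) (φk : ℕ → ℝ → H → H)
    (hφ0 : ∀ u : H, φ 0 u = u)
    (hφ' : ∀ (t : ℝ) (u : H), HasDerivAt (fun s => φ s u) (X (φ t u)) t)
    (hφk0 : ∀ (k : ℕ) (u : H), φk k 0 u = u)
    (hφk' : ∀ (k : ℕ) (t : ℝ) (u : H),
      HasDerivAt (fun s => φk k s u) (P k (X (P k (φk k t u)))) t)
    (t : ℝ) (u : H) :
    Filter.Tendsto (fun k => φk k t u) Filter.atTop (nhds (φ t u)) := by
  have hP : ∀ k, LipschitzWith 1 (P k) := fun k =>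
    LinearMap.IsSymmetricProjection.lipschitzWith_one ⟨LinearMap.ext (hidem k), hselfadj k⟩
  have hXk : ∀ k, LipschitzWith L (fun y => P k (X (P k y))) := fun k => by
    have h := (hP k).comp (hX.comp (hP k))
    rwa [one_mul, mul_one] at h
  have hXk_tendsto : ∀ y, Tendsto (fun k => P k (X (P k y))) atTop (𝓝 (X y)) := fun y =>
    tendsto_apply_of_lipschitzWith hP (hconv (X y)) ((hX.continuous.tendsto y).comp (hconv y))
  have hφc : Continuous (fun s => φ s u) :=
    continuous_iff_continuousAt.2 fun s => (hφ' s u).continuousAt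
  exact tendsto_solution_of_tendstoUniformlyOn hXk (fun s => hφ' s u) (fun k s => hφk' k s u)
    (fun k => by rw [hφk0, hφ0])
    (tendstoUniformlyOn_of_lipschitzWith hXk (isCompact_uIcc.image hφc) hXk_tendsto)

/-- **Galerkin approximation of flows**: let `X` be a Lipschitz vector field on
a real Hilbert space `H`, let `P k` be orthogonal projections (idempotent and
self-adjoint continuous linear maps) converging pointwise to the identity, and
let `φ`, `φk k` be global flows of `X` and of `X_k = P k ∘ X ∘ P k`
respectively. Then `φk k t u → φ t u` for every `t` and `u`. -/
theorem galerkin_flow_convergence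
    {H : Type*} [NormedAddCommGroup H] [InnerProductSpace ℝ H] [CompleteSpace H]
    (L : NNReal) (X : H → H) (hX : LipschitzWith L X)
    (P : ℕ → H →L[ℝ] H)
    (hidem : ∀ (k : ℕ) (u : H), P k (P k u) = P k u)
    (hselfadj : ∀ (k : ℕ) (u v : H), ⟪P k u, v⟫ = ⟪u, P k v⟫)
    (hconv : ∀ u : H, Filter.Tendsto (fun k => P k u) Filter.atTop (nhds u))
    (φ : ℝ → H → H) (φk : ℕ → ℝ → H → H)
    (hφ0 : ∀ u : H, φ 0 u = u)
    (hφ' : ∀ (t : ℝ) (u : H), HasDerivAt (fun s => φ s u) (X (φ t u)) t)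
    (hφk0 : ∀ (k : ℕ) (u : H), φk k 0 u = u)
    (hφk' : ∀ (k : ℕ) (t : ℝ) (u : H),
      HasDerivAt (fun s => φk k s u) (P k (X (P k (φk k t u)))) t)
    (t : ℝ) (u : H) :
    Filter.Tendsto (fun k => φk k t u) Filter.atTop (nhds (φ t u)) :=
  galerkin_flow_convergence_general L X hX P hidem hselfadj hconv φ φk hφ0 hφ' hφk0 hφk' t u
end

section
/- Non-standard characterization of convergence to zero: let s : ℕ → ℝ be a sequence. Then s_n → 0 as n → ∞ if and only if for every hypernatural N (i.e. every germ N over the hyperfilter on ℕ with values in ℕ) which is unlimited in the sense that n < N for every standard n ∈ ℕ, the hyperreal number *s(N) := Germ.map s N is infinitesimal. -/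
/-! An unlimited hypernatural is the germ of a sequence `φ` with `φ → ∞` along the
hyperfilter, and `*s(N)` is then infinitesimal exactly when `s ∘ φ → 0` along the
hyperfilter. Conversely, if `s` does not tend to `0`, a subsequence `φ` staying outside a
neighbourhood of `0` is strictly monotone, hence tends to `∞` along the hyperfilter. -/

open Filter Topology

theorem Filter.Germ.forall_const_lt_coe_iff_tendsto_atTop {α β : Type*} [Nonempty β]
    [SemilatticeSup β] [NoMaxOrder β] {φ : Ultrafilter α} {f : α → β} :
    (∀ b : β, (b : Germ (φ : Filter α) β) < f) ↔ Tendsto f φ atTop := by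
  simp only [atTop_basis_Ioi.tendsto_right_iff, Set.mem_Ioi, forall_const]
  exact forall_congr' fun _ ↦ Germ.coe_lt

theorem tendsto_atTop_iff_forall_tendsto_hyperfilter_comp {β : Type*} {s : ℕ → β}
    {l : Filter β} :
    Tendsto s atTop l ↔
      ∀ φ : ℕ → ℕ, Tendsto φ (hyperfilter ℕ) atTop → Tendsto (s ∘ φ) (hyperfilter ℕ) l := by
  refine ⟨fun hs φ hφ ↦ hs.comp hφ, fun h ↦ ?_⟩
  by_contra hs
  obtain ⟨U, hU, hs_notMem⟩ := not_tendsto_iff_exists_frequently_notMem.1 hs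
  obtain ⟨φ, hφ_mono, hφ_notMem⟩ := extraction_of_frequently_atTop hs_notMem
  have hφ : Tendsto φ (hyperfilter ℕ) atTop :=
    hφ_mono.tendsto_atTop.mono_left Nat.hyperfilter_le_atTop
  obtain ⟨n, hn⟩ := ((h φ hφ).eventually_mem hU).exists
  exact hφ_notMem n hn

/-- **Non-standard characterization of convergence to zero** (Proposition 3.9
of the paper): a real sequence `s` tends to `0` if and only if for every
unlimited hypernatural `N` the hyperreal `*s(N) = Germ.map s N` is
infinitesimal. -/
theorem tendsto_zero_iff_infinitesimal_at_unlimited (s : ℕ → ℝ) :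
    Filter.Tendsto s Filter.atTop (nhds 0) ↔
      ∀ N : Filter.Germ (Filter.hyperfilter ℕ : Filter ℕ) ℕ,
        (∀ n : ℕ, (n : Filter.Germ (Filter.hyperfilter ℕ : Filter ℕ) ℕ) < N) →
        Hyperreal.Infinitesimal (N.map s : Hyperreal) := by
  rw [tendsto_atTop_iff_forall_tendsto_hyperfilter_comp]
  constructor
  · rintro h ⟨φ⟩ hφ
    exact Hyperreal.isSt_ofSeq_iff_tendsto.2
      (h φ (Germ.forall_const_lt_coe_iff_tendsto_atTop.1 hφ))
  · intro h φ hφ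
    exact Hyperreal.isSt_ofSeq_iff_tendsto.1
      (h φ (Germ.forall_const_lt_coe_iff_tendsto_atTop.2 hφ))
end
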